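/- Let 𝒳, ω, 𝒮 be classes of objects in an abelian category 𝒞 satisfying: (1) ω is closed under extensions and isomorphisms; (2) ω ∩ 𝒮 is closed under direct summands and is a relative generator in ω; (3) ω ∩ 𝒮 ⊆ 𝒳 ∩ 𝒮; (4) 𝒳 ∩ 𝒮 is closed under kernels of epimorphisms between its objects; (5) Ext^i(X, W) = 0 for all i ≥ 1, X ∈ 𝒳 ∩ 𝒮, W ∈ ω ∩ 𝒮. Then ω ∩ 𝒮 = 𝒳 ∩ ω^∧ ∩ 𝒮. In particular, this equality holds whenever (𝒳, ω) is a left Frobenius pair cut along 𝒮. -/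

import Mathlib

/-!
Induction on the length of an `ω`-resolution of `X ∈ 𝒳 ∩ 𝒮`. Given `0 → K → W → X → 0` with
`W ∈ ω`, use that `ω ∩ 𝒮` generates `ω` to replace `W` by some `V ∈ ω ∩ 𝒮`; the new kernel `P` is
an extension of `K` by an object of `ω`, so its resolution dimension does not grow, and it lies in
`𝒳 ∩ 𝒮` as the kernel of the epimorphism `V → X`. By induction `P ∈ ω ∩ 𝒮`, so `Ext¹(X, P) = 0`
splits `0 → P → V → X → 0` and `X` is a direct summand of `V`.
-/

namespace CutPaper

open CategoryTheory CategoryTheory.Limits CategoryTheory.Abelian ZeroObject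

universe w v u

variable {C : Type u} [Category.{v} C] [Abelian C]

/-- There exists a short exact sequence `0 ⟶ X ⟶ Y ⟶ Z ⟶ 0` in `C`. -/
def SES (X Y Z : C) : Prop :=
  ∃ (f : X ⟶ Y) (g : Y ⟶ Z) (zero : f ≫ g = 0),
    (ShortComplex.mk f g zero).ShortExact

/-- A class of objects is closed under isomorphisms. -/
def ClosedUnderIso (A : Set C) : Prop :=
  ∀ ⦃X Y : C⦄, (X ≅ Y) → X ∈ A → Y ∈ A

/-- A class of objects is closed under direct summands (i.e. retracts). -/
def ClosedUnderDirectSummands (A : Set C) : Prop :=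
  ∀ ⦃X Y : C⦄ (i : X ⟶ Y) (r : Y ⟶ X), i ≫ r = 𝟙 X → Y ∈ A → X ∈ A

/-- A class of objects is closed under extensions. -/
def ClosedUnderExtensions (A : Set C) : Prop :=
  ∀ ⦃X Y Z : C⦄, SES X Y Z → X ∈ A → Z ∈ A → Y ∈ A

/-- A class of objects is closed under kernels of epimorphisms between its objects. -/
def ClosedUnderEpiKernels (A : Set C) : Prop :=
  ∀ ⦃X Y Z : C⦄, SES X Y Z → Y ∈ A → Z ∈ A → X ∈ A

/-- A class of objects is closed under cokernels of monomorphisms between its objects. -/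
def ClosedUnderMonoCokernels (A : Set C) : Prop :=
  ∀ ⦃X Y Z : C⦄, SES X Y Z → X ∈ A → Y ∈ A → Z ∈ A

/-- A class is left thick if it is closed under extensions, epi-kernels and direct summands. -/
def LeftThick (A : Set C) : Prop :=
  ClosedUnderExtensions A ∧ ClosedUnderEpiKernels A ∧ ClosedUnderDirectSummands A

/-- A class is right thick if closed under extensions, mono-cokernels and direct summands. -/
def RightThick (A : Set C) : Prop :=
  ClosedUnderExtensions A ∧ ClosedUnderMonoCokernels A ∧ ClosedUnderDirectSummands A

/-- A class is thick if it is both left and right thick. -/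
def IsThickClass (A : Set C) : Prop := LeftThick A ∧ RightThick A

/-- The smallest thick class containing `F`. -/
def ThickClosure (F : Set C) : Set C := ⋂₀ {T : Set C | IsThickClass T ∧ F ⊆ T}

/-- A class is closed under finite (binary) coproducts. -/
def ClosedUnderBinaryCoproducts (A : Set C) : Prop :=
  ∀ ⦃X Y : C⦄, X ∈ A → Y ∈ A → (X ⊞ Y) ∈ A

/-- `ω` is a relative cogenerator in `A`: `ω ⊆ A` and every `X ∈ A` fits in a short
exact sequence `0 → X → W → X' → 0` with `W ∈ ω`, `X' ∈ A`. -/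
def IsRelativeCogenerator (ω A : Set C) : Prop :=
  ω ⊆ A ∧ ∀ X ∈ A, ∃ W X', W ∈ ω ∧ X' ∈ A ∧ SES X W X'

/-- `ν` is a relative generator in `ω`: `ν ⊆ ω` and every `W ∈ ω` fits in a short
exact sequence `0 → W' → V → W → 0` with `V ∈ ν`, `W' ∈ ω`. -/
def IsRelativeGenerator (ν ω : Set C) : Prop :=
  ν ⊆ ω ∧ ∀ W ∈ ω, ∃ V W', V ∈ ν ∧ W' ∈ ω ∧ SES W' V W

/-- The objects of `B`-resolution dimension at most `n` (the class `B^∧_n`). -/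
def ResDimLE (B : Set C) : ℕ → Set C
  | 0 => {X | ∃ B₀ ∈ B, Nonempty (X ≅ B₀)}
  | (n + 1) => ResDimLE B n ∪ {X | ∃ K B₀, K ∈ ResDimLE B n ∧ B₀ ∈ B ∧ SES K B₀ X}

/-- The class `B^∧` of objects of finite `B`-resolution dimension. -/
def ResFin (B : Set C) : Set C := {X | ∃ n, X ∈ ResDimLE B n}

/-- The `B`-resolution dimension of an object, valued in `ℕ∞`. -/
noncomputable def resDim (B : Set C) (X : C) : ℕ∞ :=
  sInf ((fun n : ℕ => (n : ℕ∞)) '' {n | X ∈ ResDimLE B n})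

/-- The objects of `B`-coresolution dimension at most `n` (the class `B^∨_n`). -/
def CoresDimLE (B : Set C) : ℕ → Set C
  | 0 => {X | ∃ B₀ ∈ B, Nonempty (X ≅ B₀)}
  | (n + 1) => CoresDimLE B n ∪ {X | ∃ B₀ K, B₀ ∈ B ∧ K ∈ CoresDimLE B n ∧ SES X B₀ K}

/-- The `B`-coresolution dimension of an object, valued in `ℕ∞`. -/
noncomputable def coresDim (B : Set C) (X : C) : ℕ∞ :=
  sInf ((fun n : ℕ => (n : ℕ∞)) '' {n | X ∈ CoresDimLE B n})

/-- The class of `(𝒳, 𝒴)`-Gorenstein projective objects: 0-th cycles of exact,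
`Hom(-, 𝒴)`-acyclic complexes with components in `𝒳`. -/
def GorensteinProj (𝒳 𝒴 : Set C) : Set C :=
  {M | ∃ K : ChainComplex C ℤ,
    (∀ m : ℤ, K.X m ∈ 𝒳) ∧
    (∀ m : ℤ, K.ExactAt m) ∧
    (∀ Y₀ ∈ 𝒴, ∀ m : ℤ, ∀ f : K.X m ⟶ Y₀, K.d (m + 1) m ≫ f = 0 →
      ∃ g : K.X (m - 1) ⟶ Y₀, K.d m (m - 1) ≫ g = f) ∧
    Nonempty (M ≅ K.cycles 0)}

section HasExt

variable [HasExt.{w} C]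

/-- `Ext¹(A, B) = 0`. -/
def ext1Zero (A B : C) : Prop := Subsingleton (Abelian.Ext.{w} A B 1)

/-- `Extⁱ(A, B) = 0` for all `i ≥ 1`. -/
def extVanish (A B : C) : Prop := ∀ i : ℕ, 1 ≤ i → Subsingleton (Abelian.Ext.{w} A B i)

/-- `Extⁱ(X, Y) = 0` for all `i ≥ 1`, `X ∈ 𝒜`, `Y ∈ ℬ`. -/
def ExtPairVanish (𝒜 ℬ : Set C) : Prop := ∀ X ∈ 𝒜, ∀ Y ∈ ℬ, extVanish.{w} X Y

/-- The right `Ext¹`-orthogonal complement `𝒜^{⊥1}`. -/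
def rightPerp1 (𝒜 : Set C) : Set C := {N | ∀ X ∈ 𝒜, ext1Zero.{w} X N}

/-- The total right orthogonal complement `𝒜^{⊥}`. -/
def rightPerp (𝒜 : Set C) : Set C := {N | ∀ X ∈ 𝒜, extVanish.{w} X N}

/-- The left `Ext¹`-orthogonal complement `^{⊥1}ℬ`. -/
def leftPerp1 (ℬ : Set C) : Set C := {M | ∀ Y ∈ ℬ, ext1Zero.{w} M Y}

/-- `(𝒜, ℬ)` is a left cotorsion pair cut along `𝒮`. -/
def LeftCutCotorsion (𝒜 ℬ 𝒮 : Set C) : Prop :=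
  ClosedUnderDirectSummands 𝒜 ∧ 𝒜 ∩ 𝒮 = leftPerp1.{w} ℬ ∩ 𝒮

/-- `(𝒜, ℬ)` is a complete left cotorsion pair cut along `𝒮`. -/
def CompleteLeftCutCotorsion (𝒜 ℬ 𝒮 : Set C) : Prop :=
  LeftCutCotorsion.{w} 𝒜 ℬ 𝒮 ∧ ∀ S ∈ 𝒮, ∃ B₀ A₀, B₀ ∈ ℬ ∧ A₀ ∈ 𝒜 ∧ SES B₀ A₀ S

/-- `(𝒜, ℬ)` is a right cotorsion pair cut along `𝒮`. -/
def RightCutCotorsion (𝒜 ℬ 𝒮 : Set C) : Prop :=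
  ClosedUnderDirectSummands ℬ ∧ ℬ ∩ 𝒮 = rightPerp1.{w} 𝒜 ∩ 𝒮

/-- `(𝒜, ℬ)` is a complete right cotorsion pair cut along `𝒮`. -/
def CompleteRightCutCotorsion (𝒜 ℬ 𝒮 : Set C) : Prop :=
  RightCutCotorsion.{w} 𝒜 ℬ 𝒮 ∧ ∀ S ∈ 𝒮, ∃ B₀ A₀, B₀ ∈ ℬ ∧ A₀ ∈ 𝒜 ∧ SES S B₀ A₀

/-- `(𝒜, ℬ)` is a complete cotorsion pair cut along `𝒮`. -/
def CompleteCutCotorsion (𝒜 ℬ 𝒮 : Set C) : Prop :=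
  CompleteLeftCutCotorsion.{w} 𝒜 ℬ 𝒮 ∧ CompleteRightCutCotorsion.{w} 𝒜 ℬ 𝒮

/-- `(𝒜, ℬ)` is a complete left cotorsion pair in `C`. -/
def CompleteLeftCotorsionPair (𝒜 ℬ : Set C) : Prop :=
  𝒜 = leftPerp1.{w} ℬ ∧ ∀ X : C, ∃ B₀ A₀, B₀ ∈ ℬ ∧ A₀ ∈ 𝒜 ∧ SES B₀ A₀ X

/-- `(𝒜, ℬ)` is a complete cotorsion pair in `C`. -/
def CompleteCotorsionPair (𝒜 ℬ : Set C) : Prop :=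
  CompleteLeftCotorsionPair.{w} 𝒜 ℬ ∧ ℬ = rightPerp1.{w} 𝒜 ∧
    ∀ X : C, ∃ B₀ A₀, B₀ ∈ ℬ ∧ A₀ ∈ 𝒜 ∧ SES X B₀ A₀

/-- `(𝒳, ω)` is a left Frobenius pair in `C`. -/
def LeftFrobenius (𝒳 ω : Set C) : Prop :=
  LeftThick 𝒳 ∧ ClosedUnderDirectSummands ω ∧
    ExtPairVanish.{w} 𝒳 ω ∧ IsRelativeCogenerator ω 𝒳

/-- `(𝒳, ω)` is a left Frobenius pair cut along `𝒮`. -/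
def LeftFrobeniusCutAlong (𝒳 ω 𝒮 : Set C) : Prop :=
  LeftThick 𝒳 ∧
  LeftFrobenius.{w} (𝒳 ∩ 𝒮) (ω ∩ 𝒮) ∧
  (ExtPairVanish.{w} (ω ∩ 𝒮) ω ∧ IsRelativeGenerator (ω ∩ 𝒮) ω) ∧
  (ClosedUnderExtensions ω ∧ ClosedUnderDirectSummands ω)

/-- `(𝒜, ℬ)` is a left weak AB context in `C`. -/
def LeftWeakABContext (𝒜 ℬ : Set C) : Prop :=
  LeftFrobenius.{w} 𝒜 (𝒜 ∩ ℬ) ∧ RightThick ℬ ∧ ℬ ⊆ ResFin 𝒜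

/-- `(𝒜, ℬ)` is a left weak AB context cut along `𝒮`. -/
def LeftWeakABContextCutAlong (𝒜 ℬ 𝒮 : Set C) : Prop :=
  LeftFrobeniusCutAlong.{w} 𝒜 (𝒜 ∩ ℬ) 𝒮 ∧ RightThick (ℬ ∩ 𝒮) ∧
    ℬ ∩ 𝒮 ⊆ ResFin (𝒜 ∩ 𝒮)

/-- `(𝒳, 𝒴)` is a GP-admissible pair. -/
def GPAdmissible (𝒳 𝒴 : Set C) : Prop :=
  ExtPairVanish.{w} 𝒳 𝒴 ∧
  (∀ M : C, ∃ X₀, X₀ ∈ 𝒳 ∧ ∃ p : X₀ ⟶ M, Epi p) ∧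
  ClosedUnderBinaryCoproducts 𝒳 ∧ ClosedUnderBinaryCoproducts 𝒴 ∧
  ClosedUnderExtensions 𝒳 ∧
  IsRelativeCogenerator (𝒳 ∩ 𝒴) 𝒳

/-- The class `ℰ_l(𝒜, ℬ)` of objects admitting a suitable left approximation. -/
def EClassLeft (𝒜 ℬ : Set C) : Set C :=
  {X | ∃ B₀ A₀, B₀ ∈ ℬ ∧ A₀ ∈ 𝒜 ∧ SES B₀ A₀ X}

/-- The maximal left cotorsion cut `𝕊_l(𝒜, ℬ)`. -/
def MaxLeftCut (𝒜 ℬ : Set C) : Set C :=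
  ⋃₀ {𝒮 | CompleteLeftCutCotorsion.{w} 𝒜 ℬ 𝒮}

/-- `pd(M) ≤ n`, via vanishing of `Ext` in degrees `> n`. -/
def pdLE (M : C) (n : ℕ) : Prop :=
  ∀ i : ℕ, n < i → ∀ N : C, Subsingleton (Abelian.Ext.{w} M N i)

/-- The projective dimension of an object, valued in `ℕ∞`. -/
noncomputable def pd (M : C) : ℕ∞ :=
  sInf ((fun n : ℕ => (n : ℕ∞)) '' {n | pdLE.{w} M n})

/-- The projective dimension of a class of objects. -/
noncomputable def pdClass (𝒜 : Set C) : ℕ∞ := ⨆ M ∈ 𝒜, pd.{w} M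

/-- The `𝔓_𝒮`-condition of the second correspondence theorem. -/
def PPair (𝒮 ℱ 𝒢 : Set C) : Prop :=
  CompleteCutCotorsion.{w} ℱ 𝒢 (ThickClosure ℱ) ∧
  ExtPairVanish.{w} ℱ 𝒢 ∧
  IsRelativeGenerator (ℱ ∩ 𝒢 ∩ 𝒮) (ℱ ∩ 𝒢) ∧
  IsRelativeCogenerator (ℱ ∩ 𝒢 ∩ 𝒮) (ℱ ∩ 𝒢)

end HasExt

/-- The class of projective objects of `C`. -/
def ProjClass (C : Type u) [Category.{v} C] : Set C := {P : C | Projective P}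

section HasExt
variable (C) [HasExt.{w} C]

/-- The finitistic dimension of `C`. -/
noncomputable def Findim : ℕ∞ := pdClass.{w} (ResFin (ProjClass C))

end HasExt

namespace SES

lemma of_iso {X X' Y Z Z' : C} (e₁ : X ≅ X') (e₃ : Z ≅ Z') (h : SES X Y Z) : SES X' Y Z' := by
  obtain ⟨f, g, zero, hS⟩ := h
  refine ⟨e₁.inv ≫ f, g ≫ e₃.hom, by simp [reassoc_of% zero], ShortComplex.shortExact_of_iso ?_ hS⟩
  exact ShortComplex.isoMk e₁ (Iso.refl _) e₃ (by simp) (by simp)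

lemma of_epi {Y Z : C} (g : Y ⟶ Z) [Epi g] : SES (kernel g) Y Z :=
  ⟨kernel.ι g, g, kernel.condition g,
    .mk' (ShortComplex.exact_of_f_is_kernel _ (kernelIsKernel g)) inferInstance inferInstance⟩

lemma exists_iso_kernel {X Y Z : C} (h : SES X Y Z) :
    ∃ g : Y ⟶ Z, Epi g ∧ Nonempty (X ≅ kernel g) := by
  obtain ⟨_, g, _, hS⟩ := h
  have := hS.mono_f
  exact ⟨g, hS.epi_g, ⟨hS.exact.fIsKernel.conePointUniqueUpToIso (limit.isLimit _)⟩⟩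

lemma of_isPullback {P Y Z Z' : C} {fst : P ⟶ Y} {snd : P ⟶ Z'} {g : Y ⟶ Z} {q : Z' ⟶ Z}
    [Epi g] (sq : IsPullback fst snd g q) : SES (kernel g) P Z' := by
  have : Epi snd := MorphismProperty.of_isPullback (P := .epimorphisms C) sq ‹Epi g›
  have := isIso_kernel_map_of_isPullback sq.flip
  exact (of_epi snd).of_iso (asIso (kernel.map snd g fst q sq.flip.w)) (Iso.refl _)

lemma kernel_comp {X Y Z : C} (f : X ⟶ Y) (g : Y ⟶ Z) [Epi f] :
    SES (kernel f) (kernel (f ≫ g)) (kernel g) := by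
  let S := kernelCokernelCompSequence.snakeInput f g
  have : Mono S.L₁.f := inferInstanceAs (Mono (biprod.inl : X ⟶ X ⊞ Y))
  have hepi : Epi S.L₀.g := (S.L₁'.exact_iff_epi
    ((isZero_cokernel_of_epi f).eq_of_tgt _ _)).1 S.L₁'_exact
  exact ⟨S.L₀.f, S.L₀.g, S.L₀.zero, .mk' S.L₀_exact S.mono_L₀_f hepi⟩

lemma exists_common_pullback {A B Z A' B' : C} (h₁ : SES A B Z) (h₂ : SES A' B' Z) :
    ∃ Q, SES A' Q B ∧ SES A Q B' := by
  obtain ⟨g₁, _, ⟨e₁⟩⟩ := h₁.exists_iso_kernel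
  obtain ⟨g₂, _, ⟨e₂⟩⟩ := h₂.exists_iso_kernel
  have sq := IsPullback.of_hasPullback g₁ g₂
  exact ⟨pullback g₁ g₂, (of_isPullback sq.flip).of_iso e₂.symm (Iso.refl _),
    (of_isPullback sq).of_iso e₁.symm (Iso.refl _)⟩

lemma exists_splice {K W X W' V : C} (h₁ : SES K W X) (h₂ : SES W' V W) :
    ∃ P, SES W' P K ∧ SES P V X := by
  obtain ⟨g₁, _, ⟨e₁⟩⟩ := h₁.exists_iso_kernel
  obtain ⟨g₂, _, ⟨e₂⟩⟩ := h₂.exists_iso_kernel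
  exact ⟨kernel (g₂ ≫ g₁), (kernel_comp g₂ g₁).of_iso e₂.symm e₁.symm, of_epi _⟩

end SES

lemma mem_resDimLE_of_ses {ω : Set C} (hext : ClosedUnderExtensions ω)
    (hiso : ClosedUnderIso ω) (m : ℕ) {W P K : C} (hW : W ∈ ω) (hS : SES W P K)
    (hK : K ∈ ResDimLE ω m) : P ∈ ResDimLE ω m := by
  induction m generalizing K with
  | zero =>
    obtain ⟨B, hB, ⟨e⟩⟩ := hK
    exact ⟨P, hext hS hW (hiso e.symm hB), ⟨Iso.refl P⟩⟩
  | succ m ih =>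
    rcases hK with hK | ⟨K', B, hK', hB, hK'BK⟩
    · exact .inl (ih hS hK)
    · obtain ⟨Q, hWQB, hK'QP⟩ := hK'BK.exists_common_pullback hS
      exact .inr ⟨K', Q, hK', hext hWQB hW hB, hK'QP⟩

lemma exists_ses_of_isRelativeGenerator {ν ω : Set C} (hext : ClosedUnderExtensions ω)
    (hiso : ClosedUnderIso ω) (hgen : IsRelativeGenerator ν ω) {n : ℕ} {K W X : C}
    (hK : K ∈ ResDimLE ω n) (hW : W ∈ ω) (hS : SES K W X) :
    ∃ P V, P ∈ ResDimLE ω n ∧ V ∈ ν ∧ SES P V X := by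
  obtain ⟨V, W', hV, hW', hW'VW⟩ := hgen.2 W hW
  obtain ⟨P, hW'PK, hPVX⟩ := hS.exists_splice hW'VW
  exact ⟨P, V, mem_resDimLE_of_ses hext hiso n hW' hW'PK hK, hV, hPVX⟩

section HasExt

variable [HasExt.{w} C]

lemma exists_section_of_subsingleton_ext {S : ShortComplex C} (hS : S.ShortExact)
    [Subsingleton (Ext.{w} S.X₃ S.X₁ 1)] : ∃ s : S.X₃ ⟶ S.X₂, s ≫ S.g = 𝟙 S.X₃ := by
  obtain ⟨x₂, hx₂⟩ := Ext.covariant_sequence_exact₃ S.X₃ hS (Ext.mk₀ (𝟙 S.X₃)) (zero_add 1)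
    (Subsingleton.elim _ _)
  obtain ⟨s, rfl⟩ := (Ext.mk₀_bijective _ _).2 x₂
  exact ⟨s, (Ext.mk₀_bijective _ _).1 (by rwa [Ext.mk₀_comp_mk₀] at hx₂)⟩

lemma SES.mem_of_subsingleton_ext {A : Set C} (hA : ClosedUnderDirectSummands A) {P V X : C}
    (hS : SES P V X) (hV : V ∈ A) [Subsingleton (Ext.{w} X P 1)] : X ∈ A := by
  obtain ⟨_, g, _, hS⟩ := hS
  obtain ⟨s, hs⟩ := exists_section_of_subsingleton_ext.{w} hS
  exact hA s g hs hV

lemma mem_inter_of_mem_resDimLE {𝒳 ω 𝒮 : Set C} (hext : ClosedUnderExtensions ω)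
    (hiso : ClosedUnderIso ω) (hsum : ClosedUnderDirectSummands (ω ∩ 𝒮))
    (hgen : IsRelativeGenerator (ω ∩ 𝒮) ω) (hsub : ω ∩ 𝒮 ⊆ 𝒳 ∩ 𝒮)
    (hker : ClosedUnderEpiKernels (𝒳 ∩ 𝒮)) (hvan : ExtPairVanish.{w} (𝒳 ∩ 𝒮) (ω ∩ 𝒮))
    (n : ℕ) {X : C} (hX : X ∈ 𝒳 ∩ 𝒮) (hn : X ∈ ResDimLE ω n) : X ∈ ω ∩ 𝒮 := by
  induction n generalizing X with
  | zero =>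
    obtain ⟨W, hW, ⟨e⟩⟩ := hn
    exact ⟨hiso e.symm hW, hX.2⟩
  | succ n ih =>
    rcases hn with hn | ⟨K, W, hK, hW, hKWX⟩
    · exact ih hX hn
    obtain ⟨P, V, hP, hV, hPVX⟩ := exists_ses_of_isRelativeGenerator hext hiso hgen hK hW hKWX
    have hP' : P ∈ ω ∩ 𝒮 := ih (hker hPVX (hsub hV) hX) hP
    have : Subsingleton (Ext.{w} X P 1) := hvan X hX P hP' 1 le_rfl
    exact hPVX.mem_of_subsingleton_ext.{w} hsum hV

lemma inter_eq_inter_resFin_inter {𝒳 ω 𝒮 : Set C} (hext : ClosedUnderExtensions ω)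
    (hiso : ClosedUnderIso ω) (hsum : ClosedUnderDirectSummands (ω ∩ 𝒮))
    (hgen : IsRelativeGenerator (ω ∩ 𝒮) ω) (hsub : ω ∩ 𝒮 ⊆ 𝒳 ∩ 𝒮)
    (hker : ClosedUnderEpiKernels (𝒳 ∩ 𝒮)) (hvan : ExtPairVanish.{w} (𝒳 ∩ 𝒮) (ω ∩ 𝒮)) :
    ω ∩ 𝒮 = 𝒳 ∩ ResFin ω ∩ 𝒮 := by
  refine subset_antisymm (fun X hX ↦ ⟨⟨(hsub hX).1, 0, X, hX.1, ⟨Iso.refl X⟩⟩, hX.2⟩) ?_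
  rintro X ⟨⟨hX𝒳, n, hn⟩, hX𝒮⟩
  exact mem_inter_of_mem_resDimLE hext hiso hsum hgen hsub hker hvan n ⟨hX𝒳, hX𝒮⟩ hn

end HasExt

/-- Lemma 4.1. Under conditions (1)–(5) on classes `𝒳, ω, 𝒮`, one has
`ω ∩ 𝒮 = 𝒳 ∩ ω^∧ ∩ 𝒮`; in particular, this holds whenever `(𝒳, ω)` is a left Frobenius
pair cut along `𝒮`. -/
theorem inter_resFin_inter_eq_of_cut
    {C : Type u} [CategoryTheory.Category.{v} C] [CategoryTheory.Abelian C]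
    [CategoryTheory.HasExt.{w} C]
    (𝒳 ω 𝒮 : Set C) :
    ((ClosedUnderExtensions ω ∧ ClosedUnderIso ω) →
      (ClosedUnderDirectSummands (ω ∩ 𝒮) ∧ IsRelativeGenerator (ω ∩ 𝒮) ω) →
      ω ∩ 𝒮 ⊆ 𝒳 ∩ 𝒮 →
      ClosedUnderEpiKernels (𝒳 ∩ 𝒮) →
      ExtPairVanish.{w} (𝒳 ∩ 𝒮) (ω ∩ 𝒮) →
      ω ∩ 𝒮 = 𝒳 ∩ ResFin ω ∩ 𝒮) ∧
    (LeftFrobeniusCutAlong.{w} 𝒳 ω 𝒮 → ω ∩ 𝒮 = 𝒳 ∩ ResFin ω ∩ 𝒮) := by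
  refine ⟨fun ⟨hext, hiso⟩ ⟨hsum, hgen⟩ ↦ inter_eq_inter_resFin_inter hext hiso hsum hgen, ?_⟩
  rintro ⟨-, ⟨⟨-, hker, -⟩, hsum, hvan, hsub, -⟩, ⟨-, hgen⟩, hext, hsumω⟩
  have hiso : ClosedUnderIso ω := fun _ _ e ↦ hsumω e.inv e.hom e.inv_hom_id
  exact inter_eq_inter_resFin_inter hext hiso hsum hgen hsub hker hvan

end CutPaper
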